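/- Let N ≥ 1 be an integer and let B be an arbitrary N×N complex matrix. Then ∫_{H_N} exp(i·Tr(A·B)) dμ_G(A) = exp(−(1/2)·Tr(B²)), where Tr(B²) = Σ_{a,b} B_{ab} B_{ba}. -/

import Mathlib

open Matrix Complex MeasureTheory

noncomputable instance matrixMeasurableSpace (m n : Type*) : MeasurableSpace (Matrix m n ℂ) :=
  inferInstanceAs (MeasurableSpace (m → n → ℂ))

/-- `H_N`: the real vector space of `N × N` complex Hermitian matrices. -/
abbrev HermSpace (N : ℕ) : Type := ↥(selfAdjoint (Matrix (Fin N) (Fin N) ℂ))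

/-- The (unnormalized) Gaussian density `exp(−(1/2) Tr A²)` on `H_N`, as an
`ℝ≥0∞`-valued function (for Hermitian `A`, `Tr A²` is real, so we take the real part). -/
noncomputable def gaussDensity (N : ℕ) (A : HermSpace N) : ENNReal :=
  ENNReal.ofReal (Real.exp (-(1 / 2) *
    (((A : Matrix (Fin N) (Fin N) ℂ) * (A : Matrix (Fin N) (Fin N) ℂ)).trace).re))

/-- The Gaussian probability measure `μ_G` on `H_N`: the measure with density proportional
to `exp(−(1/2) Tr A²)` with respect to an additive Haar (Lebesgue) measure `ν` on `H_N`,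
normalized to total mass `1`. -/
noncomputable def gaussMeasure (N : ℕ) (ν : Measure (HermSpace N)) : Measure (HermSpace N) :=
  (∫⁻ A, gaussDensity N A ∂ν)⁻¹ • ν.withDensity (gaussDensity N)

open Real
open scoped NNReal ENNReal

/-!
In the coordinates `x (a, a) = A a a`, `x (a, b) = √2 Re A a b`, `x (b, a) = √2 Im A a b`
(`a < b`), which are orthonormal for the trace form, `H_N` becomes `ℝ^(N × N)` with
`Tr A² = ∑ x_p²`, and `A ↦ Tr (A B)` becomes `x ↦ ∑ x_p c_p` for complex coefficients `c_p`
with `∑ c_p² = Tr B²`. The integral is then the Fourier transform of the standard Gaussian on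
`ℝ^(N × N)` at a complex frequency, and its value at `B = 0` is the normalizing constant.
Any two additive Haar measures on `H_N` are proportional and `μ_G` does not see the scalar, so
`ν` may be taken to be the image of Lebesgue measure.
-/

section PairSums
variable {n M : Type*} [Fintype n] [LinearOrder n] [AddCommMonoid M]

theorem sum_prod_eq_sum_lt_add_swap (f : n × n → M) :
    ∑ p, f p = ∑ p : n × n,
      ((if p.1 < p.2 then f p + f p.swap else 0) + if p.1 = p.2 then f p else 0) := by
  have hswap : ∑ p : n × n, (if p.1 < p.2 then f p.swap else 0) =
      ∑ p : n × n, if p.2 < p.1 then f p else 0 :=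
    Fintype.sum_equiv (Equiv.prodComm n n) _ _ fun _ => rfl
  simp only [ite_add_zero, Finset.sum_add_distrib, hswap]
  rw [← Finset.sum_add_distrib, ← Finset.sum_add_distrib]
  refine Finset.sum_congr rfl fun ⟨a, b⟩ _ => ?_
  rcases lt_trichotomy a b with h | rfl | h
  · simp [h, h.ne, h.not_gt]
  · simp
  · simp [h, h.ne', h.not_gt]

theorem sum_prod_congr_of_swap {f g : n × n → M} (hdiag : ∀ a, f (a, a) = g (a, a))
    (hlt : ∀ a b, a < b → f (a, b) + f (b, a) = g (a, b) + g (b, a)) :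
    ∑ p, f p = ∑ p, g p := by
  rw [sum_prod_eq_sum_lt_add_swap f, sum_prod_eq_sum_lt_add_swap g]
  refine Finset.sum_congr rfl fun ⟨a, b⟩ _ => ?_
  rcases lt_trichotomy a b with h | rfl | h
  · simp [h, h.ne, hlt a b h]
  · simp [hdiag]
  · simp [h.not_gt, h.ne']

end PairSums

theorem ofReal_sqrt_two_mul_self : ((√2 : ℝ) : ℂ) * ((√2 : ℝ) : ℂ) = 2 := by
  rw [← ofReal_mul, Real.mul_self_sqrt zero_le_two, ofReal_ofNat]

section HermitianCoordinates
variable {n : Type*} [LinearOrder n]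

noncomputable def hermOfCoords (x : n × n → ℝ) : Matrix n n ℂ := fun a b =>
  if a = b then x (a, a)
  else if a < b then (x (a, b) + I * x (b, a)) / (√2 : ℝ)
  else (x (b, a) - I * x (a, b)) / (√2 : ℝ)

noncomputable def traceCoeff (B : Matrix n n ℂ) (p : n × n) : ℂ :=
  if p.1 = p.2 then B p.1 p.1
  else if p.1 < p.2 then (B p.1 p.2 + B p.2 p.1) / (√2 : ℝ)
  else I * (B p.1 p.2 - B p.2 p.1) / (√2 : ℝ)

theorem trace_hermOfCoords_mul [Fintype n] (x : n × n → ℝ) (B : Matrix n n ℂ) :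
    (hermOfCoords x * B).trace = ∑ p, x p * traceCoeff B p := by
  simp only [trace, diag_apply, mul_apply]
  rw [← Fintype.sum_prod_type' (f := fun a b => hermOfCoords x a b * B b a)]
  refine sum_prod_congr_of_swap (fun a => by simp [hermOfCoords, traceCoeff]) fun a b h => ?_
  simp only [hermOfCoords, traceCoeff, h, h.ne, h.ne', h.not_gt, if_true, if_false]
  field_simp
  ring

theorem traceCoeff_hermOfCoords (x : n × n → ℝ) (p : n × n) :
    traceCoeff (hermOfCoords x) p = x p := by
  have hs := ofReal_sqrt_two_mul_self
  obtain ⟨a, b⟩ := p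
  rcases lt_trichotomy a b with h | rfl | h
  · simp only [hermOfCoords, traceCoeff, h, h.ne, h.ne', h.not_gt, if_true, if_false]
    field_simp
    linear_combination (-x (a, b)) * hs
  · simp [hermOfCoords, traceCoeff]
  · simp only [hermOfCoords, traceCoeff, h, h.ne, h.ne', h.not_gt, if_true, if_false]
    field_simp
    linear_combination (-x (a, b)) * hs - 2 * x (a, b) * I_mul_I

theorem sum_traceCoeff_sq [Fintype n] (B : Matrix n n ℂ) :
    ∑ p, traceCoeff B p ^ 2 = ∑ a, ∑ b, B a b * B b a := by
  have hs := ofReal_sqrt_two_mul_self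
  rw [← Fintype.sum_prod_type' (f := fun a b => B a b * B b a)]
  refine sum_prod_congr_of_swap (fun a => by simp [traceCoeff, sq]) fun a b h => ?_
  simp only [traceCoeff, h, h.ne, h.ne', h.not_gt, if_true, if_false]
  field_simp
  linear_combination (-2 * B a b * B b a) * hs
    + (B a b ^ 2 + B b a ^ 2 - 2 * B a b * B b a) * I_mul_I

theorem hermOfCoords_isHermitian (x : n × n → ℝ) : (hermOfCoords x).IsHermitian := by
  refine IsHermitian.ext fun a b => ?_
  rcases lt_trichotomy a b with h | rfl | h
  · simp [hermOfCoords, h, h.ne, h.ne', h.not_gt, conj_ofReal]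
  · simp [hermOfCoords]
  · simp [hermOfCoords, h, h.ne, h.ne', h.not_gt, conj_ofReal, sub_eq_add_neg]

theorem traceCoeff_of_isHermitian_of_lt {A : Matrix n n ℂ} (hA : A.IsHermitian) {a b : n}
    (h : a < b) :
    traceCoeff A (a, b) = (√2 * (A a b).re : ℝ) ∧ traceCoeff A (b, a) = (√2 * (A a b).im : ℝ) := by
  have hs := ofReal_sqrt_two_mul_self
  have hs0 : ((√2 : ℝ) : ℂ) ≠ 0 := ofReal_ne_zero.2 (by positivity)
  simp only [traceCoeff, h, h.ne, h.ne', h.not_gt, if_true, if_false, ← hA.apply b a,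
    RCLike.star_def]
  constructor
  · rw [add_conj, div_eq_iff hs0]
    push_cast
    linear_combination (-(A a b).re : ℂ) * hs
  · rw [← neg_sub, sub_conj, div_eq_iff hs0]
    push_cast
    linear_combination (-(A a b).im : ℂ) * hs - 2 * (A a b).im * I_mul_I

theorem hermOfCoords_re_traceCoeff {A : Matrix n n ℂ} (hA : A.IsHermitian) :
    hermOfCoords (fun p => (traceCoeff A p).re) = A := by
  have hs0 : ((√2 : ℝ) : ℂ) ≠ 0 := ofReal_ne_zero.2 (by positivity)
  have hlt {a b : n} (h : a < b) : hermOfCoords (fun p => (traceCoeff A p).re) a b = A a b := by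
    obtain ⟨hab, hba⟩ := traceCoeff_of_isHermitian_of_lt hA h
    simp only [hermOfCoords, h, h.ne, if_true, if_false, hab, hba, ofReal_re]
    rw [div_eq_iff hs0]
    push_cast
    linear_combination (√2 : ℂ) * re_add_im (A a b)
  ext a b
  rcases lt_trichotomy a b with h | rfl | h
  · exact hlt h
  · simpa [hermOfCoords, traceCoeff] using conj_eq_iff_re.1 (hA.apply a a)
  · rw [← (hermOfCoords_isHermitian _).apply a b, ← hA.apply a b, hlt h]

theorem hermOfCoords_add (x y : n × n → ℝ) :
    hermOfCoords (x + y) = hermOfCoords x + hermOfCoords y := by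
  ext a b
  simp only [hermOfCoords, Pi.add_apply, Matrix.add_apply]
  split_ifs <;> push_cast <;> ring

theorem hermOfCoords_smul (c : ℝ) (x : n × n → ℝ) :
    hermOfCoords (c • x) = c • hermOfCoords x := by
  ext a b
  simp only [hermOfCoords, Pi.smul_apply, Matrix.smul_apply, smul_eq_mul, real_smul]
  split_ifs <;> push_cast <;> ring

end HermitianCoordinates

section NormalizedDensity
variable {α : Type*} [MeasurableSpace α]

theorem inv_lintegral_smul_withDensity_smul_measure (μ : Measure α) (f : α → ℝ≥0∞) {c : ℝ≥0∞}
    (hc0 : c ≠ 0) (hc : c ≠ ∞) :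
    (∫⁻ a, f a ∂(c • μ))⁻¹ • (c • μ).withDensity f = (∫⁻ a, f a ∂μ)⁻¹ • μ.withDensity f := by
  rw [lintegral_smul_measure, withDensity_smul_measure, smul_smul, smul_eq_mul,
    ENNReal.mul_inv (.inl hc0) (.inl hc), mul_right_comm, ENNReal.inv_mul_cancel hc0 hc, one_mul]

theorem integral_inv_lintegral_smul_withDensity {E : Type*} [NormedAddCommGroup E]
    [NormedSpace ℝ E] (μ : Measure α) {f : α → ℝ} (hf : Measurable f) (hf0 : 0 ≤ f)
    (g : α → E) :
    ∫ a, g a ∂((∫⁻ a, ENNReal.ofReal (f a) ∂μ)⁻¹ • μ.withDensity fun a => ENNReal.ofReal (f a))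
      = (∫ a, f a ∂μ)⁻¹ • ∫ a, f a • g a ∂μ := by
  rw [integral_smul_measure, ENNReal.toReal_inv,
    ← integral_eq_lintegral_of_nonneg_ae (.of_forall hf0) hf.aestronglyMeasurable]
  congr 1
  simp_rw [ENNReal.ofReal, integral_withDensity_eq_integral_smul hf.real_toNNReal, NNReal.smul_def,
    Real.coe_toNNReal _ (hf0 _)]

end NormalizedDensity

variable {N : ℕ}

instance {m n : Type*} [Fintype m] [Fintype n] : BorelSpace (Matrix m n ℂ) :=
  inferInstanceAs (BorelSpace (m → n → ℂ))

instance {m n : Type*} [Fintype m] [Fintype n] : SecondCountableTopology (Matrix m n ℂ) :=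
  inferInstanceAs (SecondCountableTopology (m → n → ℂ))

instance : BorelSpace (HermSpace N) := Subtype.borelSpace _

instance : SecondCountableTopology (HermSpace N) :=
  TopologicalSpace.Subtype.secondCountableTopology _

instance : ContinuousSMul ℝ (HermSpace N) :=
  ⟨continuous_induced_rng.2 (continuous_fst.smul (continuous_subtype_val.comp continuous_snd))⟩

noncomputable def hermCoordEquiv (N : ℕ) : (Fin N × Fin N → ℝ) ≃L[ℝ] HermSpace N :=
  LinearEquiv.toContinuousLinearEquiv
    { toFun x := ⟨hermOfCoords x, hermOfCoords_isHermitian x⟩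
      map_add' x y := Subtype.ext (hermOfCoords_add x y)
      map_smul' c x := Subtype.ext (hermOfCoords_smul c x)
      invFun A p := (traceCoeff (A : Matrix (Fin N) (Fin N) ℂ) p).re
      left_inv x := funext fun p => by simp [traceCoeff_hermOfCoords]
      right_inv A := Subtype.ext (hermOfCoords_re_traceCoeff A.2) }

theorem coe_hermCoordEquiv (x : Fin N × Fin N → ℝ) :
    (hermCoordEquiv N x : Matrix (Fin N) (Fin N) ℂ) = hermOfCoords x :=
  rfl

instance : LocallyCompactSpace (HermSpace N) :=
  (hermCoordEquiv N).toHomeomorph.locallyCompactSpace_iff.1 inferInstance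

noncomputable def hermVolume (N : ℕ) : Measure (HermSpace N) :=
  Measure.map (hermCoordEquiv N) volume

instance : (hermVolume N).IsAddHaarMeasure :=
  (hermCoordEquiv N).isAddHaarMeasure_map volume

theorem gaussMeasure_eq_of_isAddHaarMeasure (ν μ : Measure (HermSpace N)) [ν.IsAddHaarMeasure]
    [μ.IsAddHaarMeasure] : gaussMeasure N ν = gaussMeasure N μ := by
  rw [Measure.isAddLeftInvariant_eq_smul ν μ]
  exact inv_lintegral_smul_withDensity_smul_measure μ _
    (ENNReal.coe_ne_zero.2 (Measure.addHaarScalarFactor_pos_of_isAddHaarMeasure ν μ).ne')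
    ENNReal.coe_ne_top

noncomputable def gaussWeight (N : ℕ) (A : HermSpace N) : ℝ :=
  Real.exp (-(1 / 2) *
    (((A : Matrix (Fin N) (Fin N) ℂ) * (A : Matrix (Fin N) (Fin N) ℂ)).trace).re)

theorem continuous_gaussWeight : Continuous (gaussWeight N) := by
  unfold gaussWeight
  fun_prop

theorem integral_gaussMeasure (ν : Measure (HermSpace N)) (g : HermSpace N → ℂ) :
    ∫ A, g A ∂(gaussMeasure N ν) = (∫ A, gaussWeight N A ∂ν)⁻¹ • ∫ A, gaussWeight N A • g A ∂ν :=
  integral_inv_lintegral_smul_withDensity ν continuous_gaussWeight.measurable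
    (fun _ => (Real.exp_pos _).le) g

theorem gaussWeight_hermCoordEquiv (x : Fin N × Fin N → ℝ) :
    gaussWeight N (hermCoordEquiv N x) = Real.exp (-(1 / 2) * ∑ p, x p ^ 2) := by
  have h : (hermOfCoords x * hermOfCoords x).trace = ((∑ p, x p ^ 2 : ℝ) : ℂ) := by
    simp [trace_hermOfCoords_mul, traceCoeff_hermOfCoords, sq]
  rw [gaussWeight, coe_hermCoordEquiv, h, ofReal_re]

theorem integral_gaussWeight_smul_cexp_trace (B : Matrix (Fin N) (Fin N) ℂ) :
    ∫ A, gaussWeight N A • cexp (I * ((A : Matrix (Fin N) (Fin N) ℂ) * B).trace) ∂hermVolume N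
      = (π / (1 / 2) : ℂ) ^ (Fintype.card (Fin N × Fin N) / 2 : ℂ)
        * cexp (-(1 / 2) * ∑ a, ∑ b, B a b * B b a) := by
  have hexponent (x : Fin N × Fin N → ℝ) :
      gaussWeight N (hermCoordEquiv N x) •
          cexp (I * ((hermCoordEquiv N x : Matrix _ _ ℂ) * B).trace)
        = cexp (-(1 / 2) * ∑ p, (x p : ℂ) ^ 2 + ∑ p, I * traceCoeff B p * x p) := by
    rw [gaussWeight_hermCoordEquiv, coe_hermCoordEquiv, real_smul, ofReal_exp, ← Complex.exp_add,
      trace_hermOfCoords_mul, Finset.mul_sum _ _ I]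
    push_cast
    congr 2
    exact Finset.sum_congr rfl fun p _ => by ring
  have hsq : (∑ p, (I * traceCoeff B p) ^ 2) / (4 * (1 / 2))
      = -(1 / 2) * ∑ a, ∑ b, B a b * B b a := by
    simp_rw [mul_pow, I_sq, ← Finset.mul_sum, sum_traceCoeff_sq]
    ring
  have hemb : MeasurableEmbedding (hermCoordEquiv N) :=
    (hermCoordEquiv N).toHomeomorph.measurableEmbedding
  rw [hermVolume, hemb.integral_map]
  simp only [hexponent]
  rw [GaussianFourier.integral_cexp_neg_mul_sum_add (by norm_num), hsq]

theorem gaussian_fourier_transform_hermitian_general (N : ℕ)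
    (B : Matrix (Fin N) (Fin N) ℂ)
    (ν : Measure (HermSpace N)) (hν : ν.IsAddHaarMeasure) :
    ∫ A : HermSpace N,
        Complex.exp (Complex.I * ((A : Matrix (Fin N) (Fin N) ℂ) * B).trace)
        ∂(gaussMeasure N ν)
      = Complex.exp (-(1 / 2 : ℂ) * ∑ a, ∑ b, B a b * B b a) := by
  have hnorm : ((∫ A, gaussWeight N A ∂hermVolume N : ℝ) : ℂ)
      = (π / (1 / 2) : ℂ) ^ (Fintype.card (Fin N × Fin N) / 2 : ℂ) := by
    simpa [integral_complex_ofReal] using integral_gaussWeight_smul_cexp_trace (N := N) 0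
  have hnorm0 : (π / (1 / 2) : ℂ) ^ (Fintype.card (Fin N × Fin N) / 2 : ℂ) ≠ 0 :=
    cpow_ne_zero_iff.2 (.inl (by simp [pi_ne_zero]))
  rw [gaussMeasure_eq_of_isAddHaarMeasure ν (hermVolume N), integral_gaussMeasure,
    integral_gaussWeight_smul_cexp_trace, real_smul, ofReal_inv, hnorm, inv_mul_cancel_left₀ hnorm0]

/-- For any `N × N` complex matrix `B`,
`∫_{H_N} exp(i Tr(A B)) dμ_G(A) = exp(−(1/2) Tr B²)`, with `Tr B² = Σ_{a,b} B_{ab} B_{ba}`. -/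
theorem gaussian_fourier_transform_hermitian (N : ℕ) (hN : 1 ≤ N)
    (B : Matrix (Fin N) (Fin N) ℂ)
    (ν : Measure (HermSpace N)) (hν : ν.IsAddHaarMeasure) :
    ∫ A : HermSpace N,
        Complex.exp (Complex.I * ((A : Matrix (Fin N) (Fin N) ℂ) * B).trace)
        ∂(gaussMeasure N ν)
      = Complex.exp (-(1 / 2 : ℂ) * ∑ a, ∑ b, B a b * B b a) :=
  gaussian_fourier_transform_hermitian_general N B ν hν
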